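/- arXiv:2105.06922 — 2 statements merged into one kernel-verified Lean document; each statement's English description precedes it below -/
import Mathlib

section
/- For all ρA, ρB ∈ Ω_n, the quantum optimal transport cost with cost matrix C^Q satisfies T_{C^Q}(ρA, ρB) ≤ (1/2)·(1 − Re(trace(ρA * ρB))). Moreover, if ρA or ρB is a pure state (i.e., equals x xᴴ for some unit vector x ∈ ℂ^n), then equality holds: T_{C^Q}(ρA, ρB) = (1/2)·(1 − Re(trace(ρA * ρB))). -/
open Matrix ComplexOrder

/-- A density matrix: positive semidefinite with trace one. -/
def IsDensityMatrix {k : Type*} [Fintype k] [DecidableEq k] (ρ : Matrix k k ℂ) : Prop :=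
  ρ.PosSemidef ∧ ρ.trace = 1

/-- Partial trace over the second factor. -/
noncomputable def trB {m n : ℕ} (R : Matrix (Fin m × Fin n) (Fin m × Fin n) ℂ) :
    Matrix (Fin m) (Fin m) ℂ :=
  Matrix.of fun i j => ∑ p, R (i, p) (j, p)

/-- Partial trace over the first factor. -/
noncomputable def trA {m n : ℕ} (R : Matrix (Fin m × Fin n) (Fin m × Fin n) ℂ) :
    Matrix (Fin n) (Fin n) ℂ :=
  Matrix.of fun p q => ∑ i, R (i, p) (i, q)

/-- The set of quantum couplings of two density matrices. -/
def QCouplings {m n : ℕ} (ρA : Matrix (Fin m) (Fin m) ℂ) (ρB : Matrix (Fin n) (Fin n) ℂ) :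
    Set (Matrix (Fin m × Fin n) (Fin m × Fin n) ℂ) :=
  {R | IsDensityMatrix R ∧ trB R = ρA ∧ trA R = ρB}

/-- The quantum optimal transport cost. -/
noncomputable def QOT {m n : ℕ} (C : Matrix (Fin m × Fin n) (Fin m × Fin n) ℂ)
    (ρA : Matrix (Fin m) (Fin m) ℂ) (ρB : Matrix (Fin n) (Fin n) ℂ) : ℝ :=
  sInf ((fun R => ((C * R).trace).re) '' QCouplings ρA ρB)

/-- The SWAP matrix on `Fin n × Fin n`. -/
noncomputable def swapM (n : ℕ) : Matrix (Fin n × Fin n) (Fin n × Fin n) ℂ :=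
  Matrix.of fun x y => if x.1 = y.2 ∧ x.2 = y.1 then 1 else 0

/-- The quantum cost matrix `C^Q = (1/2) (I - S)`. -/
noncomputable def CQ (n : ℕ) : Matrix (Fin n × Fin n) (Fin n × Fin n) ℂ :=
  (1 / 2 : ℂ) • (1 - swapM n)

/-- Kronecker product of square matrices indexed by `Fin m` and `Fin n`. -/
noncomputable def kron {m n : ℕ} (A : Matrix (Fin m) (Fin m) ℂ)
    (B : Matrix (Fin n) (Fin n) ℂ) : Matrix (Fin m × Fin n) (Fin m × Fin n) ℂ :=
  Matrix.of fun x y => A x.1 y.1 * B x.2 y.2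

open scoped Kronecker

/-!
The product coupling `ρA ⊗ ρB` costs `½ (1 - Re tr (ρA ρB))`, because `tr (S (A ⊗ B)) = tr (A B)`;
the costs of all couplings are nonnegative since `C^Q = ½ (1 - S)` is an orthogonal projection.

If `tr_B R = x xᴴ` is pure (the case of `tr_A R` is symmetric), then
`tr (R ((1 - x xᴴ) ⊗ 1)) = tr (x xᴴ (1 - x xᴴ)) = 0`, and positivity of `R` forces
`R ((1 - x xᴴ) ⊗ 1) = 0`. Hence `R = (x xᴴ ⊗ 1) R (x xᴴ ⊗ 1) = x xᴴ ⊗ tr_A R`: a pure marginal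
admits only the product coupling, and the infimum is attained there.
-/

section StarProjection

variable {ι : Type*} [Fintype ι] {R Q : Matrix ι ι ℂ}

theorem IsStarProjection.trace_mul_eq_trace_conjTranspose_mul_mul (hQ : IsStarProjection Q) :
    (R * Q).trace = (Qᴴ * R * Q).trace := by
  rw [← star_eq_conjTranspose, hQ.isSelfAdjoint.star_eq, trace_mul_cycle,
    hQ.isIdempotentElem.eq, trace_mul_comm]

theorem Matrix.PosSemidef.trace_mul_starProjection_nonneg (hR : R.PosSemidef)
    (hQ : IsStarProjection Q) : 0 ≤ (R * Q).trace := by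
  rw [hQ.trace_mul_eq_trace_conjTranspose_mul_mul]
  exact (hR.conjTranspose_mul_mul_same Q).trace_nonneg

open scoped MatrixOrder Matrix.Norms.L2Operator in
theorem Matrix.PosSemidef.mul_starProjection_eq_zero (hR : R.PosSemidef) (hQ : IsStarProjection Q)
    (h : (R * Q).trace = 0) : R * Q = 0 := by
  classical
  rw [hQ.trace_mul_eq_trace_conjTranspose_mul_mul,
    (hR.conjTranspose_mul_mul_same Q).trace_eq_zero_iff] at h
  obtain ⟨B, rfl⟩ := CStarAlgebra.nonneg_iff_eq_star_mul_self.mp hR.nonneg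
  have hBQ : B * Q = 0 := by
    rw [← conjTranspose_mul_self_eq_zero, conjTranspose_mul, ← h]
    simp only [star_eq_conjTranspose, Matrix.mul_assoc]
  rw [Matrix.mul_assoc, hBQ, Matrix.mul_zero]

end StarProjection

theorem IsStarProjection.kronecker {ι κ : Type*} [Fintype ι] [Fintype κ] {A : Matrix ι ι ℂ}
    {B : Matrix κ κ ℂ} (hA : IsStarProjection A) (hB : IsStarProjection B) :
    IsStarProjection (A ⊗ₖ B) where
  isIdempotentElem := by
    rw [IsIdempotentElem, ← mul_kronecker_mul, hA.isIdempotentElem.eq, hB.isIdempotentElem.eq]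
  isSelfAdjoint := by
    rw [IsSelfAdjoint, star_eq_conjTranspose, conjTranspose_kronecker, ← star_eq_conjTranspose,
      ← star_eq_conjTranspose, hA.isSelfAdjoint.star_eq, hB.isSelfAdjoint.star_eq]

theorem isStarProjection_vecMulVec {ι : Type*} [Fintype ι] {x : ι → ℂ}
    (hx : star x ⬝ᵥ x = 1) :
    IsStarProjection (vecMulVec x (star x)) where
  isIdempotentElem := by rw [IsIdempotentElem, vecMulVec_mul_vecMulVec, hx, one_smul]
  isSelfAdjoint := by rw [IsSelfAdjoint, star_eq_conjTranspose, conjTranspose_vecMulVec, star_star]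

section PartialTrace

variable {m n : ℕ}

theorem trB_kronecker (A : Matrix (Fin m) (Fin m) ℂ) (B : Matrix (Fin n) (Fin n) ℂ) :
    trB (A ⊗ₖ B) = B.trace • A := by
  ext i j
  simp [trB, trace, ← Finset.mul_sum, mul_comm]

theorem trA_kronecker (A : Matrix (Fin m) (Fin m) ℂ) (B : Matrix (Fin n) (Fin n) ℂ) :
    trA (A ⊗ₖ B) = A.trace • B := by
  ext p q
  simp [trA, trace, ← Finset.sum_mul]

theorem trace_mul_kronecker_one (R : Matrix (Fin m × Fin n) (Fin m × Fin n) ℂ)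
    (A : Matrix (Fin m) (Fin m) ℂ) : (R * (A ⊗ₖ 1)).trace = (trB R * A).trace := by
  simp only [trace, diag_apply, mul_apply, kroneckerMap_apply, one_apply, mul_ite, mul_one,
    mul_zero, Fintype.sum_prod_type, Finset.sum_ite_eq', Finset.mem_univ, ↓reduceIte, trB,
    of_apply, Finset.sum_mul]
  exact Finset.sum_congr rfl fun _ _ => Finset.sum_comm

theorem kronecker_submatrix_swap (A : Matrix (Fin m) (Fin m) ℂ) (B : Matrix (Fin n) (Fin n) ℂ) :
    (A ⊗ₖ B).submatrix Prod.swap Prod.swap = B ⊗ₖ A := by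
  ext z w
  simp [mul_comm]

theorem vecMulVec_kronecker_one_mul_mul (x : Fin m → ℂ)
    (R : Matrix (Fin m × Fin n) (Fin m × Fin n) ℂ) :
    (vecMulVec x (star x) ⊗ₖ 1) * R * (vecMulVec x (star x) ⊗ₖ 1) =
      vecMulVec x (star x) ⊗ₖ
        of fun p q => ∑ k, ∑ l, star (x k) * R (k, p) (l, q) * x l := by
  ext ⟨i, p⟩ ⟨j, q⟩
  simp only [mul_apply, kroneckerMap_apply, vecMulVec_apply, Pi.star_apply, RCLike.star_def,
    one_apply, mul_ite, mul_one, mul_zero, ite_mul, zero_mul, Fintype.sum_prod_type,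
    Finset.sum_ite_eq, Finset.mem_univ, ↓reduceIte, Finset.sum_mul, Finset.sum_ite_eq', of_apply,
    Finset.mul_sum]
  rw [Finset.sum_comm]
  exact Finset.sum_congr rfl fun _ _ => Finset.sum_congr rfl fun _ _ => by ring

variable {R : Matrix (Fin m × Fin n) (Fin m × Fin n) ℂ}

theorem Matrix.PosSemidef.eq_vecMulVec_kronecker_trA (hR : R.PosSemidef) {x : Fin m → ℂ}
    (hx : star x ⬝ᵥ x = 1) (hB : trB R = vecMulVec x (star x)) :
    R = vecMulVec x (star x) ⊗ₖ trA R := by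
  set P := vecMulVec x (star x)
  have hP : IsStarProjection P := isStarProjection_vecMulVec hx
  have hPi : IsStarProjection (P ⊗ₖ (1 : Matrix (Fin n) (Fin n) ℂ)) := hP.kronecker (.one _)
  have hRPi : R = R * (P ⊗ₖ 1) := by
    have hzero : (R * (1 - P ⊗ₖ 1)).trace = 0 := by
      rw [← one_kronecker_one, Matrix.mul_sub, trace_sub, trace_mul_kronecker_one,
        trace_mul_kronecker_one, hB, hP.isIdempotentElem.eq, Matrix.mul_one, sub_self]
    have := hR.mul_starProjection_eq_zero hPi.one_sub hzero
    rwa [Matrix.mul_sub, Matrix.mul_one, sub_eq_zero] at this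
  have hPiR : R = (P ⊗ₖ 1) * R := by
    calc R = (R * (P ⊗ₖ 1))ᴴ := by rw [← hRPi, hR.isHermitian.eq]
      _ = (P ⊗ₖ 1) * R := by
        rw [conjTranspose_mul, hR.isHermitian.eq, ← star_eq_conjTranspose,
          hPi.isSelfAdjoint.star_eq]
  obtain ⟨B, hRB⟩ : ∃ B, R = P ⊗ₖ B :=
    ⟨_, by rw [← vecMulVec_kronecker_one_mul_mul, ← hPiR, ← hRPi]⟩
  rw [hRB, trA_kronecker, trace_vecMulVec, dotProduct_comm, hx, one_smul]

theorem Matrix.PosSemidef.eq_trB_kronecker_vecMulVec (hR : R.PosSemidef) {x : Fin n → ℂ}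
    (hx : star x ⬝ᵥ x = 1) (hA : trA R = vecMulVec x (star x)) :
    R = trB R ⊗ₖ vecMulVec x (star x) := by
  have hswap := (hR.submatrix Prod.swap).eq_vecMulVec_kronecker_trA hx hA
  calc R = (R.submatrix Prod.swap Prod.swap).submatrix Prod.swap Prod.swap := rfl
    _ = trB R ⊗ₖ vecMulVec x (star x) := by
      rw [hswap]
      exact kronecker_submatrix_swap _ _

end PartialTrace

theorem isStarProjection_half_smul_one_sub {A : Type*} [Ring A] [StarRing A] [Algebra ℂ A]
    [StarModule ℂ A] {S : A} (hS : IsSelfAdjoint S) (hSS : S * S = 1) :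
    IsStarProjection ((1 / 2 : ℂ) • (1 - S)) where
  isIdempotentElem := by
    rw [IsIdempotentElem, smul_mul_smul_comm, sub_mul, one_mul, mul_sub, mul_one, hSS,
      show (1 : A) - S - (S - 1) = (2 : ℂ) • (1 - S) by rw [two_smul]; abel, smul_smul]
    norm_num
  isSelfAdjoint := by
    rw [IsSelfAdjoint, star_smul, star_sub, star_one, hS.star_eq]
    simp

section Swap

variable {n : ℕ}

theorem conjTranspose_swapM : (swapM n)ᴴ = swapM n := by
  ext z w
  simp only [conjTranspose_apply, swapM, of_apply, apply_ite star, star_one, star_zero]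
  grind

theorem swapM_mul_swapM : swapM n * swapM n = 1 := by
  ext z w
  simp [swapM, mul_apply, one_apply, Fintype.sum_prod_type, ite_and, Prod.ext_iff]

theorem isStarProjection_CQ : IsStarProjection (CQ n) :=
  isStarProjection_half_smul_one_sub conjTranspose_swapM swapM_mul_swapM

theorem trace_swapM_mul_kronecker (A B : Matrix (Fin n) (Fin n) ℂ) :
    (swapM n * (A ⊗ₖ B)).trace = (A * B).trace := by
  simp only [trace, swapM, ite_and, diag_apply, mul_apply, of_apply, kroneckerMap_apply, ite_mul,
    one_mul, zero_mul, Fintype.sum_prod_type, Finset.sum_ite_eq, Finset.mem_univ, ↓reduceIte]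
  exact Finset.sum_comm

end Swap

section Couplings

variable {m n : ℕ} {ρA : Matrix (Fin m) (Fin m) ℂ} {ρB : Matrix (Fin n) (Fin n) ℂ}
  {R : Matrix (Fin m × Fin n) (Fin m × Fin n) ℂ}

theorem kronecker_mem_QCouplings (hA : IsDensityMatrix ρA) (hB : IsDensityMatrix ρB) :
    ρA ⊗ₖ ρB ∈ QCouplings ρA ρB :=
  ⟨⟨hA.1.kronecker hB.1, by rw [trace_kronecker, hA.2, hB.2, one_mul]⟩,
    by rw [trB_kronecker, hB.2, one_smul], by rw [trA_kronecker, hA.2, one_smul]⟩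

theorem eq_kronecker_of_mem_QCouplings_of_eq_vecMulVec_left {x : Fin m → ℂ}
    (hx : star x ⬝ᵥ x = 1) (hA : ρA = vecMulVec x (star x)) (hR : R ∈ QCouplings ρA ρB) :
    R = ρA ⊗ₖ ρB := by
  obtain ⟨⟨hR, -⟩, rfl, rfl⟩ := hR
  rw [hA]
  exact hR.eq_vecMulVec_kronecker_trA hx hA

theorem eq_kronecker_of_mem_QCouplings_of_eq_vecMulVec_right {x : Fin n → ℂ}
    (hx : star x ⬝ᵥ x = 1) (hB : ρB = vecMulVec x (star x)) (hR : R ∈ QCouplings ρA ρB) :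
    R = ρA ⊗ₖ ρB := by
  obtain ⟨⟨hR, -⟩, rfl, rfl⟩ := hR
  rw [hB]
  exact hR.eq_trB_kronecker_vecMulVec hx hB

theorem QOT_le_of_mem_QCouplings {C : Matrix (Fin m × Fin n) (Fin m × Fin n) ℂ}
    (hC : IsStarProjection C) (hR : R ∈ QCouplings ρA ρB) :
    QOT C ρA ρB ≤ ((C * R).trace).re := by
  refine csInf_le ⟨0, ?_⟩ ⟨R, hR, rfl⟩
  rintro _ ⟨R', hR', rfl⟩
  dsimp only
  rw [trace_mul_comm]
  exact (Complex.nonneg_iff.mp (hR'.1.1.trace_mul_starProjection_nonneg hC)).1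

theorem QOT_eq_of_QCouplings_eq_singleton (C : Matrix (Fin m × Fin n) (Fin m × Fin n) ℂ)
    (h : QCouplings ρA ρB = {R}) : QOT C ρA ρB = ((C * R).trace).re := by
  rw [QOT, h, Set.image_singleton, csInf_singleton]

end Couplings

theorem re_trace_CQ_mul_kronecker {n : ℕ} {ρA ρB : Matrix (Fin n) (Fin n) ℂ}
    (hA : ρA.trace = 1) (hB : ρB.trace = 1) :
    ((CQ n * (ρA ⊗ₖ ρB)).trace).re = (1 / 2) * (1 - ((ρA * ρB).trace).re) := by
  rw [CQ, smul_mul, trace_smul, sub_mul, one_mul, trace_sub, trace_swapM_mul_kronecker,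
    trace_kronecker, hA, hB, one_mul, smul_eq_mul]
  simp

theorem star_dotProduct_self_eq_one {ι : Type*} [Fintype ι] {x : ι → ℂ}
    (hx : ∑ i, Complex.normSq (x i) = 1) : star x ⬝ᵥ x = 1 := by
  simp [dotProduct, ← Complex.normSq_eq_conj_mul_self, ← Complex.ofReal_sum, hx]

/-- the independent-coupling upper bound for `T_{C^Q}`, with equality
when one of the marginals is a pure state. -/
theorem qot_CQ_upper_bound (n : ℕ) (ρA ρB : Matrix (Fin n) (Fin n) ℂ)
    (hA : IsDensityMatrix ρA) (hB : IsDensityMatrix ρB) :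
    QOT (CQ n) ρA ρB ≤ (1 / 2) * (1 - ((ρA * ρB).trace).re) ∧
    ((∃ x : Fin n → ℂ, (∑ i, Complex.normSq (x i)) = 1 ∧
        (ρA = Matrix.vecMulVec x (star x) ∨ ρB = Matrix.vecMulVec x (star x))) →
      QOT (CQ n) ρA ρB = (1 / 2) * (1 - ((ρA * ρB).trace).re)) := by
  have hmem := kronecker_mem_QCouplings hA hB
  rw [← re_trace_CQ_mul_kronecker hA.2 hB.2]
  refine ⟨QOT_le_of_mem_QCouplings isStarProjection_CQ hmem, ?_⟩
  rintro ⟨x, hx, hpure⟩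
  replace hx := star_dotProduct_self_eq_one hx
  refine QOT_eq_of_QCouplings_eq_singleton _ (Set.eq_singleton_iff_unique_mem.mpr ⟨hmem, ?_⟩)
  exact fun R hR => hpure.elim (eq_kronecker_of_mem_QCouplings_of_eq_vecMulVec_left hx · hR)
    (eq_kronecker_of_mem_QCouplings_of_eq_vecMulVec_right hx · hR)
end

section
/- Let s, t ∈ ℝ^n be probability vectors and let U be a unitary n×n complex matrix. Then T_{C^Q}(Uᴴ · diag(s) · U, Uᴴ · diag(t) · U) ≥ (1/2) · max over i ∈ Fin n of (√(s i) − √(t i))². Moreover, equality holds if and only if there exists an index i such that either (for all j ≠ i, s j ≥ t j and t i · t j ≥ s i · s j) or (for all j ≠ i, t j ≥ s j and s i · s j ≥ t i · t j). -/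
open Matrix ComplexOrder

/-!
For a coupling `R` of `diag s` and `diag t`, the cost `(1 - Re ∑ₓ R (x.swap) x) / 2` only sees the
diagonal `a` of `R` (a classical coupling of `s` and `t`) and the coherences `R (x.swap) x`, which
positivity bounds by `√(a x.swap) * √(a x)`; the coherent lift of `a` attains these bounds. Hence
`T_{C^Q}(diag s, diag t) = (1 - G) / 2`, where `G` is the largest `swapOverlap` of a classical
coupling (attained by compactness). Conjugating by `U ⊗ U`, which commutes with the swap, reduces the general case to the
diagonal one.

For a classical coupling `a` and an index `i`, Cauchy–Schwarz on row and column `i` and AM-GM on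
the remaining block give `swapOverlap a ≤ 1 - (√sᵢ - √tᵢ)²`. Equality forces row and column `i` to
be proportional and the remaining block to be symmetric, which yields the condition of the theorem;
conversely, under that condition an explicit coupling attains the bound.
-/

open Finset Kronecker

section RealInequalities

variable {ι : Type*}

lemma two_mul_sqrt_mul_sqrt_le_add {u v : ℝ} (hu : 0 ≤ u) (hv : 0 ≤ v) :
    2 * (√u * √v) ≤ u + v := by
  nlinarith [sq_nonneg (√u - √v), Real.sq_sqrt hu, Real.sq_sqrt hv]

lemma eq_of_two_mul_sqrt_mul_sqrt_eq_add {u v : ℝ} (hu : 0 ≤ u) (hv : 0 ≤ v)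
    (h : 2 * (√u * √v) = u + v) : u = v := by
  have : (√u - √v) ^ 2 = 0 := by nlinarith [Real.sq_sqrt hu, Real.sq_sqrt hv]
  rw [← Real.sq_sqrt hu, ← Real.sq_sqrt hv, sub_eq_zero.mp (pow_eq_zero_iff two_ne_zero |>.mp this)]

lemma mul_eq_mul_of_sum_sqrt_mul_sqrt_eq [Fintype ι] {f g : ι → ℝ} (hf : ∀ i, 0 ≤ f i)
    (hg : ∀ i, 0 ≤ g i) (h : ∑ i, √(f i) * √(g i) = √(∑ i, f i) * √(∑ i, g i)) (i : ι) :
    (∑ j, g j) * f i = (∑ j, f j) * g i := by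
  set S := ∑ j, f j
  set T := ∑ j, g j
  have hS : 0 ≤ S := sum_nonneg fun j _ => hf j
  have hT : 0 ≤ T := sum_nonneg fun j _ => hg j
  -- termwise AM-GM with weights chosen so that the two sums agree
  have hle : ∀ j ∈ univ, 2 * (√(T * f j) * √(S * g j)) ≤ T * f j + S * g j :=
    fun j _ => two_mul_sqrt_mul_sqrt_le_add (mul_nonneg hT (hf j)) (mul_nonneg hS (hg j))
  have hsum : ∑ j, 2 * (√(T * f j) * √(S * g j)) = ∑ j, (T * f j + S * g j) :=
    calc ∑ j, 2 * (√(T * f j) * √(S * g j))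
        = 2 * (√T * √S) * ∑ j, √(f j) * √(g j) := by
          rw [mul_sum]
          congr 1 with j
          rw [Real.sqrt_mul hT, Real.sqrt_mul hS]
          ring
      _ = 2 * (√S ^ 2 * √T ^ 2) := by rw [h]; ring
      _ = ∑ j, (T * f j + S * g j) := by
          rw [sum_add_distrib, ← mul_sum, ← mul_sum, Real.sq_sqrt hS, Real.sq_sqrt hT]
          ring
  exact eq_of_two_mul_sqrt_mul_sqrt_eq_add (mul_nonneg hT (hf i)) (mul_nonneg hS (hg i))
    ((sum_eq_sum_iff_of_le hle).mp hsum i (mem_univ i))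

lemma sum_product_flip (a : ι → ι → ℝ) (A : Finset ι) :
    ∑ x ∈ A ×ˢ A, a x.2 x.1 = ∑ x ∈ A ×ˢ A, a x.1 x.2 := by
  rw [sum_product, sum_product_right]

lemma sum_sum_sqrt_mul_sqrt_le {a : ι → ι → ℝ} (ha : ∀ j p, 0 ≤ a j p) (A : Finset ι) :
    ∑ j ∈ A, ∑ p ∈ A, √(a j p) * √(a p j) ≤ ∑ j ∈ A, ∑ p ∈ A, a j p := by
  rw [← sum_product', ← sum_product']
  have := sum_le_sum fun x (_ : x ∈ A ×ˢ A) =>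
    two_mul_sqrt_mul_sqrt_le_add (ha x.1 x.2) (ha x.2 x.1)
  rw [← mul_sum, sum_add_distrib, sum_product_flip] at this
  linarith

lemma symm_of_sum_sum_sqrt_mul_sqrt_eq {a : ι → ι → ℝ} (ha : ∀ j p, 0 ≤ a j p) {A : Finset ι}
    (h : ∑ j ∈ A, ∑ p ∈ A, √(a j p) * √(a p j) = ∑ j ∈ A, ∑ p ∈ A, a j p) :
    ∀ j ∈ A, ∀ p ∈ A, a j p = a p j := by
  rw [← sum_product', ← sum_product'] at h
  have hsum : ∑ x ∈ A ×ˢ A, 2 * (√(a x.1 x.2) * √(a x.2 x.1))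
      = ∑ x ∈ A ×ˢ A, (a x.1 x.2 + a x.2 x.1) := by
    rw [← mul_sum, sum_add_distrib, sum_product_flip, h]
    ring
  intro j hj p hp
  exact eq_of_two_mul_sqrt_mul_sqrt_eq_add (ha j p) (ha p j)
    ((sum_eq_sum_iff_of_le fun x _ => two_mul_sqrt_mul_sqrt_le_add (ha x.1 x.2) (ha x.2 x.1)).mp
      hsum (j, p) (mem_product.mpr ⟨hj, hp⟩))

end RealInequalities

/-- The second alternative of the equality case, at the index `i`. It forces `t i ≤ s i`, and it is
exactly what makes the coupling built in `exists_isCoupling_swapOverlap_eq_of_lt` nonnegative. -/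
def PivotCondition {ι : Type*} (s t : ι → ℝ) (i : ι) : Prop :=
  ∀ j, j ≠ i → s j ≤ t j ∧ t i * t j ≤ s i * s j

section ClassicalCoupling

variable {ι : Type*} [Fintype ι]

structure IsCoupling (a : ι → ι → ℝ) (s t : ι → ℝ) : Prop where
  nonneg : ∀ j p, 0 ≤ a j p
  sum_row : ∀ j, ∑ p, a j p = s j
  sum_col : ∀ p, ∑ j, a j p = t p

/-- The Bhattacharyya coefficient of `a` and its transpose. For a coupling `a`,
`(1 - swapOverlap a) / 2` is the cost of `coherentLift a`. -/
noncomputable def swapOverlap (a : ι → ι → ℝ) : ℝ :=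
  ∑ j, ∑ p, √(a j p) * √(a p j)

lemma swapOverlap_transpose (a : ι → ι → ℝ) :
    swapOverlap (fun j p => a p j) = swapOverlap a := by
  simp only [swapOverlap, mul_comm]

lemma continuous_swapOverlap : Continuous (swapOverlap : (ι → ι → ℝ) → ℝ) := by
  unfold swapOverlap
  fun_prop

namespace IsCoupling

variable {a : ι → ι → ℝ} {s t : ι → ℝ}

lemma transpose (h : IsCoupling a s t) : IsCoupling (fun j p => a p j) t s :=
  ⟨fun j p => h.nonneg p j, h.sum_col, h.sum_row⟩

lemma source_nonneg (h : IsCoupling a s t) (j : ι) : 0 ≤ s j :=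
  h.sum_row j ▸ sum_nonneg fun p _ => h.nonneg j p

lemma target_nonneg (h : IsCoupling a s t) (p : ι) : 0 ≤ t p :=
  h.transpose.source_nonneg p

lemma sum_sqrt_mul_sqrt_le (h : IsCoupling a s t) (i : ι) :
    ∑ p, √(a i p) * √(a p i) ≤ √(s i) * √(t i) := by
  simpa only [h.sum_row, h.sum_col] using
    Real.sum_sqrt_mul_sqrt_le univ (h.nonneg i) (fun p => h.nonneg p i)

lemma proportional_of_sum_sqrt_mul_sqrt_eq (h : IsCoupling a s t) {i : ι}
    (heq : ∑ p, √(a i p) * √(a p i) = √(s i) * √(t i)) (p : ι) :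
    t i * a i p = s i * a p i := by
  have := mul_eq_mul_of_sum_sqrt_mul_sqrt_eq (h.nonneg i) (fun p => h.nonneg p i)
    (by rwa [h.sum_row, h.sum_col]) p
  rwa [h.sum_row, h.sum_col] at this

end IsCoupling

lemma isCompact_setOf_isCoupling (s t : ι → ℝ) : IsCompact {a : ι → ι → ℝ | IsCoupling a s t} := by
  have hset : {a : ι → ι → ℝ | IsCoupling a s t} = (⋂ j, ⋂ p, {a | 0 ≤ a j p}) ∩
      (⋂ j, {a | ∑ p, a j p = s j}) ∩ ⋂ p, {a | ∑ j, a j p = t p} := by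
    ext a
    simp only [Set.mem_ofPred_eq, Set.mem_inter_iff, Set.mem_iInter]
    exact ⟨fun h => ⟨⟨h.1, h.2⟩, h.3⟩, fun ⟨⟨h1, h2⟩, h3⟩ => ⟨h1, h2, h3⟩⟩
  refine (isCompact_Icc (a := 0) (b := fun j _ => s j)).of_isClosed_subset ?_ ?_
  · rw [hset]
    refine ((isClosed_iInter fun j => isClosed_iInter fun p => ?_).inter
      (isClosed_iInter fun j => ?_)).inter (isClosed_iInter fun p => ?_)
    · exact isClosed_le continuous_const (by fun_prop)
    · exact isClosed_eq (by fun_prop) continuous_const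
    · exact isClosed_eq (by fun_prop) continuous_const
  · intro a h
    refine ⟨fun j p => h.nonneg j p, fun j p => ?_⟩
    exact (single_le_sum (fun q _ => h.nonneg j q) (mem_univ p)).trans_eq (h.sum_row j)

variable [DecidableEq ι]

lemma swapOverlap_eq_row_add_block (a : ι → ι → ℝ) (i : ι) (hi : 0 ≤ a i i) :
    swapOverlap a = 2 * ∑ p, √(a i p) * √(a p i) - a i i
      + ∑ j ∈ univ.erase i, ∑ p ∈ univ.erase i, √(a j p) * √(a p j) := by
  have hcol : ∑ j ∈ univ.erase i, √(a j i) * √(a i j) = ∑ p, √(a i p) * √(a p i) - a i i := by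
    rw [sum_erase_eq_sub (mem_univ i), Real.mul_self_sqrt hi]
    simp_rw [mul_comm (√(a _ i))]
  have hsplit : ∀ j, ∑ p, √(a j p) * √(a p j)
      = √(a j i) * √(a i j) + ∑ p ∈ univ.erase i, √(a j p) * √(a p j) :=
    fun j => (add_sum_erase _ _ (mem_univ i)).symm
  rw [swapOverlap, ← add_sum_erase _ _ (mem_univ i),
    sum_congr rfl fun j (_ : j ∈ univ.erase i) => hsplit j, sum_add_distrib, hcol]
  ring

lemma sum_erase_sub_eq_sub {s t : ι → ℝ} (hs : ∑ j, s j = 1) (ht : ∑ j, t j = 1) (i : ι) :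
    ∑ j ∈ univ.erase i, (t j - s j) = s i - t i := by
  rw [sum_sub_distrib, sum_erase_eq_sub (mem_univ i), sum_erase_eq_sub (mem_univ i), hs, ht]
  ring

namespace IsCoupling

variable {a : ι → ι → ℝ} {s t : ι → ℝ}

lemma sum_sum_erase (h : IsCoupling a s t) (hs : ∑ j, s j = 1) (i : ι) :
    ∑ j ∈ univ.erase i, ∑ p ∈ univ.erase i, a j p = 1 - s i - t i + a i i := by
  rw [sum_congr rfl fun j _ => sum_erase_eq_sub (mem_univ i)]
  simp only [h.sum_row]
  rw [sum_sub_distrib, sum_erase_eq_sub (mem_univ i), sum_erase_eq_sub (mem_univ i), hs,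
    h.sum_col]
  ring

theorem swapOverlap_le (h : IsCoupling a s t) (hs : ∑ j, s j = 1) (i : ι) :
    swapOverlap a ≤ 1 - (√(s i) - √(t i)) ^ 2 := by
  have hrow := h.sum_sqrt_mul_sqrt_le i
  have hblock := sum_sum_sqrt_mul_sqrt_le h.nonneg (univ.erase i)
  rw [h.sum_sum_erase hs i] at hblock
  rw [swapOverlap_eq_row_add_block a i (h.nonneg i i)]
  nlinarith [Real.sq_sqrt (h.source_nonneg i), Real.sq_sqrt (h.target_nonneg i)]

lemma pivotCondition_of_proportional_of_symm (h : IsCoupling a s t) {i : ι} (hts : t i ≤ s i)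
    (hprop : ∀ p, t i * a i p = s i * a p i)
    (hsymm : ∀ j ∈ univ.erase i, ∀ p ∈ univ.erase i, a j p = a p j) :
    PivotCondition s t i := by
  intro j hj
  have hj' : j ∈ univ.erase i := mem_erase.mpr ⟨hj, mem_univ j⟩
  set m := ∑ p ∈ univ.erase i, a j p
  have hm : 0 ≤ m := sum_nonneg fun p _ => h.nonneg j p
  have hsj : s j = a j i + m := by rw [← h.sum_row j, ← add_sum_erase _ _ (mem_univ i)]
  have htj : t j = a i j + m := by
    rw [← h.sum_col j, ← add_sum_erase _ _ (mem_univ i)]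
    exact congrArg _ (sum_congr rfl fun p hp => hsymm p hp j hj')
  have hji_le : a j i ≤ t i :=
    h.sum_col i ▸ single_le_sum (fun k _ => h.nonneg k i) (mem_univ j)
  -- `s i * a j i = t i * a i j ≤ s i * a i j`, and if `s i = 0` then `a j i ≤ t i = 0`
  have hji : a j i ≤ a i j := by nlinarith [hprop j, h.nonneg i j, h.nonneg j i]
  constructor
  · linarith
  · rw [hsj, htj]
    nlinarith [mul_nonneg (sub_nonneg.2 hts) hm, hprop j]

theorem pivotCondition_of_swapOverlap_eq (h : IsCoupling a s t) (hs : ∑ j, s j = 1) {i : ι}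
    (hts : t i ≤ s i) (heq : swapOverlap a = 1 - (√(s i) - √(t i)) ^ 2) :
    PivotCondition s t i := by
  have hrow := h.sum_sqrt_mul_sqrt_le i
  have hblock := sum_sum_sqrt_mul_sqrt_le h.nonneg (univ.erase i)
  -- equality forces both estimates in `swapOverlap_le` to be tight
  rw [swapOverlap_eq_row_add_block a i (h.nonneg i i)] at heq
  have hsq := Real.sq_sqrt (h.source_nonneg i)
  have htq := Real.sq_sqrt (h.target_nonneg i)
  have hrow_eq : ∑ p, √(a i p) * √(a p i) = √(s i) * √(t i) := by
    rw [h.sum_sum_erase hs i] at hblock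
    nlinarith
  have hblock_eq : ∑ j ∈ univ.erase i, ∑ p ∈ univ.erase i, √(a j p) * √(a p j)
      = ∑ j ∈ univ.erase i, ∑ p ∈ univ.erase i, a j p := by
    rw [h.sum_sum_erase hs i] at hblock ⊢
    nlinarith
  exact h.pivotCondition_of_proportional_of_symm hts (h.proportional_of_sum_sqrt_mul_sqrt_eq hrow_eq)
    (symm_of_sum_sum_sqrt_mul_sqrt_eq h.nonneg hblock_eq)

theorem pivotCondition_or_of_swapOverlap_eq (h : IsCoupling a s t) (hs : ∑ j, s j = 1)
    (ht : ∑ j, t j = 1) {i : ι} (heq : swapOverlap a = 1 - (√(s i) - √(t i)) ^ 2) :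
    PivotCondition t s i ∨ PivotCondition s t i := by
  rcases le_total (t i) (s i) with hts | hst
  · exact Or.inr (h.pivotCondition_of_swapOverlap_eq hs hts heq)
  · refine Or.inl (h.transpose.pivotCondition_of_swapOverlap_eq ht hst ?_)
    rw [swapOverlap_transpose, heq]
    ring

end IsCoupling

end ClassicalCoupling

section PivotPlan

variable {ι : Type*} [DecidableEq ι]

def pivotPlan (i : ι) (u v : ℝ) (c w : ι → ℝ) : ι → ι → ℝ := fun j p =>
  (if j = i then u * c p else 0) + (if p = i then v * c j else 0) + (if j = p then w j else 0)

variable {i : ι} {u v : ℝ} {c w : ι → ℝ}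

lemma pivotPlan_nonneg (hu : 0 ≤ u) (hv : 0 ≤ v) (hc : ∀ p, 0 ≤ c p) (hw : ∀ j, 0 ≤ w j)
    (j p : ι) : 0 ≤ pivotPlan i u v c w j p := by
  have := mul_nonneg hu (hc p)
  have := mul_nonneg hv (hc j)
  have := hw j
  unfold pivotPlan
  split_ifs <;> linarith

lemma sqrt_mul_sqrt_pivotPlan (hu : 0 ≤ u) (hv : 0 ≤ v) (hc : ∀ p, 0 ≤ c p) (hw : ∀ j, 0 ≤ w j)
    (hci : c i = 0) (j p : ι) :
    √(pivotPlan i u v c w j p) * √(pivotPlan i u v c w p j)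
      = pivotPlan i (√u * √v) (√u * √v) c w j p := by
  unfold pivotPlan
  by_cases hj : j = i <;> by_cases hp : p = i <;> by_cases hjp : j = p <;> subst_vars <;>
    simp_all [Real.sqrt_mul, Real.mul_self_sqrt, eq_comm]
  all_goals rw [mul_mul_mul_comm, Real.mul_self_sqrt (hc _)]
  ring

variable [Fintype ι]

lemma sum_pivotPlan_row (j : ι) :
    ∑ p, pivotPlan i u v c w j p = (if j = i then u * ∑ p, c p else 0) + v * c j + w j := by
  simp [pivotPlan, sum_add_distrib, mul_sum]

lemma sum_pivotPlan_col (p : ι) :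
    ∑ j, pivotPlan i u v c w j p = u * c p + (if p = i then v * ∑ j, c j else 0) + w p := by
  simp [pivotPlan, sum_add_distrib, mul_sum]

lemma swapOverlap_pivotPlan (hu : 0 ≤ u) (hv : 0 ≤ v) (hc : ∀ p, 0 ≤ c p) (hw : ∀ j, 0 ≤ w j)
    (hci : c i = 0) :
    swapOverlap (pivotPlan i u v c w) = 2 * (√u * √v) * ∑ p, c p + ∑ j, w j := by
  simp only [swapOverlap, sqrt_mul_sqrt_pivotPlan hu hv hc hw hci, sum_pivotPlan_row,
    sum_add_distrib, sum_ite_eq', mem_univ, if_true, ← mul_sum]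
  ring

lemma PivotCondition.le {s t : ι → ℝ} (hs : ∑ j, s j = 1) (ht : ∑ j, t j = 1)
    (h : PivotCondition s t i) : t i ≤ s i := by
  have := sum_nonneg fun j (hj : j ∈ univ.erase i) => sub_nonneg.2 (h j (ne_of_mem_erase hj)).1
  linarith [sum_erase_sub_eq_sub hs ht i]

lemma PivotCondition.eq_of_eq {s t : ι → ℝ} (hs : ∑ j, s j = 1) (ht : ∑ j, t j = 1)
    (h : PivotCondition s t i) (heq : t i = s i) : s = t := by
  funext j
  rcases eq_or_ne j i with rfl | hj
  · exact heq.symm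
  · have := (sum_eq_zero_iff_of_nonneg fun k hk => sub_nonneg.2 (h k (ne_of_mem_erase hk)).1).mp
      (by rw [sum_erase_sub_eq_sub hs ht i, heq, sub_self]) j (mem_erase.mpr ⟨hj, mem_univ j⟩)
    linarith

/-- The mass `s i - t i` that `s` has in excess at `i` is spread over the other indices in
proportion to `c`, the excess of `t` there; row `i` and column `i` then carry `s i • c` and
`t i • c`, and the diagonal carries what is left. -/
lemma exists_isCoupling_swapOverlap_eq_of_lt {s t : ι → ℝ} (hs0 : ∀ j, 0 ≤ s j)
    (ht0 : ∀ j, 0 ≤ t j) (hs1 : ∑ j, s j = 1) (ht1 : ∑ j, t j = 1) (h : PivotCondition s t i)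
    (hlt : t i < s i) :
    ∃ a, IsCoupling a s t ∧ swapOverlap a = 1 - (√(s i) - √(t i)) ^ 2 := by
  have hd : 0 < s i - t i := sub_pos.2 hlt
  have hite : ∀ f : ι → ℝ, ∑ p, (if p = i then 0 else f p) = ∑ p ∈ univ.erase i, f p :=
    fun f => by
      rw [← add_sum_erase _ _ (mem_univ i), if_pos rfl, zero_add]
      exact sum_congr rfl fun p hp => if_neg (ne_of_mem_erase hp)
  set c : ι → ℝ := fun p => if p = i then 0 else (t p - s p) / (s i - t i)
  set w : ι → ℝ := fun j => if j = i then 0 else s j - t i * c j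
  have hc : ∀ p, 0 ≤ c p := fun p => by
    by_cases hp : p = i
    · simp [c, hp]
    · simpa [c, hp] using div_nonneg (sub_nonneg.2 (h p hp).1) hd.le
  have hw : ∀ j, 0 ≤ w j := fun j => by
    by_cases hj : j = i
    · simp [w, hj]
    · have : s j - t i * c j = (s i * s j - t i * t j) / (s i - t i) := by
        simp only [c, if_neg hj]
        field_simp
        ring
      simpa [w, hj, this] using div_nonneg (sub_nonneg.2 (h j hj).2) hd.le
  have hcsum : ∑ p, c p = 1 := by
    rw [hite, ← sum_div, sum_erase_sub_eq_sub hs1 ht1 i, div_self hd.ne']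
  have hwsum : ∑ j, w j = 1 - s i - t i := by
    rw [hite, sum_sub_distrib, ← mul_sum, sum_erase_eq_sub (mem_univ i),
      sum_erase_eq_sub (mem_univ i), hcsum, hs1]
    simp [c]
  refine ⟨pivotPlan i (s i) (t i) c w, ⟨pivotPlan_nonneg (hs0 i) (ht0 i) hc hw,
    fun j => ?_, fun p => ?_⟩, ?_⟩
  · rw [sum_pivotPlan_row, hcsum]
    by_cases hj : j = i <;> simp [c, w, hj]
  · rw [sum_pivotPlan_col, hcsum]
    by_cases hp : p = i
    · simp [c, w, hp]
    · simp only [c, w, hp, if_false]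
      field_simp
      ring
  · rw [swapOverlap_pivotPlan (hs0 i) (ht0 i) hc hw (by simp [c]), hcsum, hwsum, sub_sq,
      Real.sq_sqrt (hs0 i), Real.sq_sqrt (ht0 i)]
    ring

theorem exists_isCoupling_swapOverlap_eq {s t : ι → ℝ} (hs0 : ∀ j, 0 ≤ s j) (ht0 : ∀ j, 0 ≤ t j)
    (hs1 : ∑ j, s j = 1) (ht1 : ∑ j, t j = 1) (h : PivotCondition s t i) :
    ∃ a, IsCoupling a s t ∧ swapOverlap a = 1 - (√(s i) - √(t i)) ^ 2 := by
  rcases (h.le hs1 ht1).eq_or_lt with heq | hlt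
  · obtain rfl := h.eq_of_eq hs1 ht1 heq
    refine ⟨pivotPlan i 0 0 0 s, ⟨pivotPlan_nonneg le_rfl le_rfl (fun _ => le_rfl) hs0,
      fun j => by simp [sum_pivotPlan_row], fun p => by simp [sum_pivotPlan_col]⟩, ?_⟩
    rw [swapOverlap_pivotPlan (c := 0) le_rfl le_rfl (fun _ => le_rfl) hs0 rfl, hs1]
    simp
  · exact exists_isCoupling_swapOverlap_eq_of_lt hs0 ht0 hs1 ht1 h hlt

theorem exists_isCoupling_swapOverlap_eq_of_or {s t : ι → ℝ} (hs0 : ∀ j, 0 ≤ s j)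
    (ht0 : ∀ j, 0 ≤ t j) (hs1 : ∑ j, s j = 1) (ht1 : ∑ j, t j = 1)
    (h : PivotCondition t s i ∨ PivotCondition s t i) :
    ∃ a, IsCoupling a s t ∧ swapOverlap a = 1 - (√(s i) - √(t i)) ^ 2 := by
  rcases h with h | h
  · obtain ⟨a, ha, hval⟩ := exists_isCoupling_swapOverlap_eq ht0 hs0 ht1 hs1 h
    exact ⟨_, ha.transpose, by rw [swapOverlap_transpose, hval]; ring⟩
  · exact exists_isCoupling_swapOverlap_eq hs0 ht0 hs1 ht1 h

end PivotPlan

lemma Matrix.PosSemidef.re_apply_le {k : Type*} [Fintype k] [DecidableEq k] {R : Matrix k k ℂ}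
    (hR : R.PosSemidef) (x y : k) : (R x y).re ≤ √((R x x).re) * √((R y y).re) := by
  have hdet := (hR.submatrix ![x, y]).det_nonneg
  rw [det_fin_two] at hdet
  simp only [submatrix_apply, Matrix.cons_val_zero, Matrix.cons_val_one, sub_nonneg] at hdet
  rw [← hR.isHermitian.apply y x, Complex.le_def] at hdet
  have hxx := Complex.nonneg_iff.mp (hR.diag_nonneg (i := x))
  have hyy := Complex.nonneg_iff.mp (hR.diag_nonneg (i := y))
  simp only [Complex.mul_re, Complex.mul_im, Complex.star_def, Complex.conj_re,
    Complex.conj_im] at hdet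
  rw [← Real.sqrt_mul hxx.1]
  apply Real.le_sqrt_of_sq_le
  nlinarith [hdet.1, sq_nonneg (R x y).im, hxx.2, hyy.2]

lemma Matrix.posSemidef_fiberwiseOuter {X Y : Type*} [Fintype X] [Fintype Y] [DecidableEq Y]
    (g : X → Y) (f : X → ℝ) :
    (Matrix.of fun x y => if g x = g y then ((f x * f y : ℝ) : ℂ) else 0).PosSemidef := by
  let B : Matrix Y X ℂ := Matrix.of fun z x => if g x = z then (f x : ℂ) else 0
  convert posSemidef_conjTranspose_mul_self B using 1
  ext x y
  simp only [B, of_apply, Matrix.mul_apply, conjTranspose_apply, Complex.ofReal_mul, eq_comm,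
    RCLike.star_def, mul_ite, mul_zero, sum_ite_eq', mem_univ, if_true]
  split_ifs <;> simp

lemma trB_conj_kronecker {m n : ℕ} (V : Matrix (Fin m) (Fin m) ℂ) {W : Matrix (Fin n) (Fin n) ℂ}
    (hW : W * Wᴴ = 1) (R : Matrix (Fin m × Fin n) (Fin m × Fin n) ℂ) :
    trB ((V ⊗ₖ W)ᴴ * R * (V ⊗ₖ W)) = Vᴴ * trB R * V := by
  have hW' : ∀ d c, ∑ p, W d p * star (W c p) = if d = c then 1 else 0 := fun d c => by
    simpa [Matrix.mul_apply, Matrix.one_apply] using congrFun (congrFun hW d) c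
  ext i j
  simp only [trB, Matrix.mul_apply, conjTranspose_apply, kroneckerMap_apply, of_apply,
    Fintype.sum_prod_type, star_mul', sum_mul, mul_sum]
  calc _ = ∑ l : Fin m, ∑ d : Fin n, ∑ k : Fin m, ∑ c : Fin n,
          star (V k i) * R (k, c) (l, d) * V l j * ∑ p, W d p * star (W c p) := by
        simp only [mul_sum]
        rw [sum_comm]; refine sum_congr rfl fun l _ => ?_
        rw [sum_comm]; refine sum_congr rfl fun d _ => ?_
        rw [sum_comm]; refine sum_congr rfl fun k _ => ?_
        rw [sum_comm]; refine sum_congr rfl fun c _ => ?_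
        refine sum_congr rfl fun p _ => ?_
        ring
    _ = _ := by
        simp only [hW', mul_ite, mul_one, mul_zero, sum_ite_eq, mem_univ, if_true]
        exact sum_congr rfl fun l _ => sum_comm

lemma trA_conj_kronecker {m n : ℕ} {V : Matrix (Fin m) (Fin m) ℂ} (hV : V * Vᴴ = 1)
    (W : Matrix (Fin n) (Fin n) ℂ) (R : Matrix (Fin m × Fin n) (Fin m × Fin n) ℂ) :
    trA ((V ⊗ₖ W)ᴴ * R * (V ⊗ₖ W)) = Wᴴ * trA R * W := by
  have hV' : ∀ l k, ∑ i, V l i * star (V k i) = if l = k then 1 else 0 := fun l k => by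
    simpa [Matrix.mul_apply, Matrix.one_apply] using congrFun (congrFun hV l) k
  ext p q
  simp only [trA, Matrix.mul_apply, conjTranspose_apply, kroneckerMap_apply, of_apply,
    Fintype.sum_prod_type, star_mul', sum_mul, mul_sum]
  calc _ = ∑ l : Fin m, ∑ d : Fin n, ∑ k : Fin m, ∑ c : Fin n,
          star (W c p) * R (k, c) (l, d) * W d q * ∑ i, V l i * star (V k i) := by
        simp only [mul_sum]
        rw [sum_comm]; refine sum_congr rfl fun l _ => ?_
        rw [sum_comm]; refine sum_congr rfl fun d _ => ?_
        rw [sum_comm]; refine sum_congr rfl fun k _ => ?_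
        rw [sum_comm]; refine sum_congr rfl fun c _ => ?_
        refine sum_congr rfl fun i _ => ?_
        ring
    _ = ∑ l : Fin m, ∑ d : Fin n, ∑ c : Fin n, ∑ k : Fin m,
          star (W c p) * R (k, c) (l, d) * W d q * ∑ i, V l i * star (V k i) :=
        sum_congr rfl fun l _ => sum_congr rfl fun d _ => sum_comm
    _ = _ := by
        simp only [hV', mul_ite, mul_one, mul_zero, sum_ite_eq, mem_univ, if_true]
        rw [sum_comm]
        exact sum_congr rfl fun d _ => sum_comm

section Quantum

variable {n : ℕ}

lemma swapM_apply (x y : Fin n × Fin n) : swapM n x y = if y = x.swap then 1 else 0 := by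
  simp only [swapM, of_apply, Prod.ext_iff, Prod.fst_swap, Prod.snd_swap, eq_comm (a := y.1),
    eq_comm (a := y.2)]
  exact if_congr and_comm rfl rfl

lemma trace_swapM_mul (R : Matrix (Fin n × Fin n) (Fin n × Fin n) ℂ) :
    (swapM n * R).trace = ∑ x, R x.swap x := by
  simp [Matrix.trace, Matrix.mul_apply, swapM_apply]

lemma re_trace_CQ_mul (R : Matrix (Fin n × Fin n) (Fin n × Fin n) ℂ) :
    ((CQ n * R).trace).re = ((R.trace).re - (∑ x, R x.swap x).re) / 2 := by
  rw [CQ, Matrix.smul_mul, trace_smul, Matrix.sub_mul, Matrix.one_mul, trace_sub, trace_swapM_mul,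
    smul_eq_mul, show (1 / 2 : ℂ) = ((1 / 2 : ℝ) : ℂ) by push_cast; rfl, Complex.re_ofReal_mul,
    Complex.sub_re]
  ring

/-- The quantum coupling with diagonal `a` whose coherences between `(j, p)` and `(p, j)` are as
large as positivity allows. -/
noncomputable def coherentLift (a : Fin n → Fin n → ℝ) :
    Matrix (Fin n × Fin n) (Fin n × Fin n) ℂ :=
  Matrix.of fun x y =>
    if x = y ∨ x = y.swap then ((√(a x.1 x.2) * √(a y.1 y.2) : ℝ) : ℂ) else 0

lemma posSemidef_coherentLift (a : Fin n → Fin n → ℝ) : (coherentLift a).PosSemidef := by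
  convert posSemidef_fiberwiseOuter (fun x : Fin n × Fin n => s(x.1, x.2))
    fun x => √(a x.1 x.2) using 1
  ext x y
  exact if_congr Sym2.mk_eq_mk_iff.symm rfl rfl

variable {a : Fin n → Fin n → ℝ}

lemma coherentLift_apply_eq_zero {x y : Fin n × Fin n} (h : x ≠ y) (h' : x ≠ y.swap) :
    coherentLift a x y = 0 :=
  if_neg fun hxy => hxy.elim h h'

lemma coherentLift_apply_self (ha : ∀ j p, 0 ≤ a j p) (x : Fin n × Fin n) :
    coherentLift a x x = a x.1 x.2 := by
  simp only [coherentLift, of_apply, true_or, if_true, Real.mul_self_sqrt (ha _ _)]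

lemma trace_coherentLift (ha : ∀ j p, 0 ≤ a j p) :
    (coherentLift a).trace = ((∑ j, ∑ p, a j p : ℝ) : ℂ) := by
  simp [Matrix.trace, coherentLift_apply_self ha, Fintype.sum_prod_type]

lemma trB_coherentLift (ha : ∀ j p, 0 ≤ a j p) :
    trB (coherentLift a) = diagonal fun j => ((∑ p, a j p : ℝ) : ℂ) := by
  ext i j
  by_cases hij : i = j
  · subst hij
    simp [trB, coherentLift_apply_self ha]
  · have : ∀ p, coherentLift a (i, p) (j, p) = 0 := fun p =>
      coherentLift_apply_eq_zero (by simp [hij]) (by grind [Prod.swap])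
    simp [trB, this, hij]

lemma trA_coherentLift (ha : ∀ j p, 0 ≤ a j p) :
    trA (coherentLift a) = diagonal fun p => ((∑ j, a j p : ℝ) : ℂ) := by
  ext p q
  by_cases hpq : p = q
  · subst hpq
    simp [trA, coherentLift_apply_self ha]
  · have : ∀ j, coherentLift a (j, p) (j, q) = 0 := fun j =>
      coherentLift_apply_eq_zero (by simp [hpq]) (by grind [Prod.swap])
    simp [trA, this, hpq]

lemma sum_coherentLift_swap :
    ∑ x, coherentLift a x.swap x = swapOverlap a := by
  simp only [coherentLift, of_apply, or_true, if_true, swapOverlap, Fintype.sum_prod_type,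
    Prod.fst_swap, Prod.snd_swap]
  push_cast
  rw [sum_comm]

lemma swapM_mul_kronecker_self (U : Matrix (Fin n) (Fin n) ℂ) :
    swapM n * (U ⊗ₖ U) = (U ⊗ₖ U) * swapM n := by
  ext x y
  have : ∀ z : Fin n × Fin n, (y = z.swap) = (z = y.swap) := fun z =>
    propext (eq_comm.trans Prod.swap_eq_iff_eq_swap)
  simp only [Matrix.mul_apply, swapM_apply, this, mul_ite, ite_mul, mul_one, one_mul, mul_zero,
    zero_mul, sum_ite_eq', mem_univ, if_true, kroneckerMap_apply, Prod.fst_swap, Prod.snd_swap]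
  ring

lemma kronecker_self_mul_conjTranspose {U : Matrix (Fin n) (Fin n) ℂ} (hU : U * Uᴴ = 1) :
    (U ⊗ₖ U) * (U ⊗ₖ U)ᴴ = 1 := by
  rw [conjTranspose_kronecker, ← mul_kronecker_mul, hU, one_kronecker_one]

lemma trace_CQ_mul_conj_kronecker {U : Matrix (Fin n) (Fin n) ℂ} (hU : U * Uᴴ = 1)
    (R : Matrix (Fin n × Fin n) (Fin n × Fin n) ℂ) :
    (CQ n * ((U ⊗ₖ U)ᴴ * R * (U ⊗ₖ U))).trace = (CQ n * R).trace := by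
  have hcomm : CQ n * (U ⊗ₖ U) = (U ⊗ₖ U) * CQ n := by
    simp only [CQ, Matrix.smul_mul, Matrix.mul_smul, Matrix.sub_mul, Matrix.mul_sub, Matrix.one_mul,
      Matrix.mul_one, swapM_mul_kronecker_self]
  rw [show CQ n * ((U ⊗ₖ U)ᴴ * R * (U ⊗ₖ U)) = CQ n * (U ⊗ₖ U)ᴴ * R * (U ⊗ₖ U) by
      simp only [Matrix.mul_assoc], trace_mul_comm]
  simp only [← Matrix.mul_assoc, ← hcomm]
  rw [Matrix.mul_assoc (CQ n), kronecker_self_mul_conjTranspose hU, Matrix.mul_one]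

lemma image_cost_QCouplings_subset_conj {U : Matrix (Fin n) (Fin n) ℂ} (hU : U * Uᴴ = 1)
    (A B : Matrix (Fin n) (Fin n) ℂ) :
    (fun R => ((CQ n * R).trace).re) '' QCouplings A B ⊆
      (fun R => ((CQ n * R).trace).re) '' QCouplings (Uᴴ * A * U) (Uᴴ * B * U) := by
  rintro _ ⟨R, ⟨⟨hpsd, htr⟩, hA, hB⟩, rfl⟩
  refine ⟨(U ⊗ₖ U)ᴴ * R * (U ⊗ₖ U), ⟨⟨hpsd.conjTranspose_mul_mul_same _, ?_⟩, ?_, ?_⟩, ?_⟩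
  · rw [trace_mul_cycle, kronecker_self_mul_conjTranspose hU, Matrix.one_mul, htr]
  · rw [trB_conj_kronecker U hU, hA]
  · rw [trA_conj_kronecker hU U, hB]
  · simp only [trace_CQ_mul_conj_kronecker hU]

theorem QOT_CQ_conj {U : Matrix (Fin n) (Fin n) ℂ} (hU : Uᴴ * U = 1)
    (A B : Matrix (Fin n) (Fin n) ℂ) :
    QOT (CQ n) (Uᴴ * A * U) (Uᴴ * B * U) = QOT (CQ n) A B := by
  have hU' : U * Uᴴ = 1 := mul_eq_one_comm.mp hU
  have hback : ∀ M : Matrix (Fin n) (Fin n) ℂ, Uᴴᴴ * (Uᴴ * M * U) * Uᴴ = M := fun M => by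
    simp only [conjTranspose_conjTranspose, ← Matrix.mul_assoc, hU', Matrix.one_mul]
    rw [Matrix.mul_assoc, hU', Matrix.mul_one]
  unfold QOT
  congr 1
  refine Set.Subset.antisymm ?_ (image_cost_QCouplings_subset_conj hU' A B)
  have := image_cost_QCouplings_subset_conj (U := Uᴴ) (by rwa [conjTranspose_conjTranspose])
    (Uᴴ * A * U) (Uᴴ * B * U)
  rwa [hback, hback] at this

variable {s t : Fin n → ℝ}

lemma coherentLift_mem_QCouplings {a : Fin n → Fin n → ℝ} (h : IsCoupling a s t)
    (hs : ∑ j, s j = 1) :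
    coherentLift a ∈ QCouplings (diagonal fun i => (s i : ℂ)) (diagonal fun i => (t i : ℂ)) := by
  refine ⟨⟨posSemidef_coherentLift a, ?_⟩, ?_, ?_⟩
  · rw [trace_coherentLift h.nonneg]
    simp [h.sum_row, hs]
  · rw [trB_coherentLift h.nonneg]
    simp [h.sum_row]
  · rw [trA_coherentLift h.nonneg]
    simp [h.sum_col]

lemma re_trace_CQ_mul_coherentLift {a : Fin n → Fin n → ℝ} (h : IsCoupling a s t)
    (hs : ∑ j, s j = 1) :
    ((CQ n * coherentLift a).trace).re = (1 - swapOverlap a) / 2 := by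
  rw [re_trace_CQ_mul, trace_coherentLift h.nonneg, sum_coherentLift_swap]
  simp [h.sum_row, hs]

variable {R : Matrix (Fin n × Fin n) (Fin n × Fin n) ℂ}

lemma isCoupling_re_diag
    (hR : R ∈ QCouplings (diagonal fun i => (s i : ℂ)) (diagonal fun i => (t i : ℂ))) :
    IsCoupling (fun j p => (R (j, p) (j, p)).re) s t := by
  obtain ⟨⟨hpsd, -⟩, hA, hB⟩ := hR
  refine ⟨fun j p => (Complex.nonneg_iff.mp hpsd.diag_nonneg).1, fun j => ?_, fun p => ?_⟩
  · simpa [trB, ← Complex.re_sum] using congrArg Complex.re (congrFun₂ hA j j)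
  · simpa [trA, ← Complex.re_sum] using congrArg Complex.re (congrFun₂ hB p p)

lemma le_re_trace_CQ_mul (hpsd : R.PosSemidef) (htr : R.trace = 1) :
    (1 - swapOverlap fun j p => (R (j, p) (j, p)).re) / 2 ≤ ((CQ n * R).trace).re := by
  have hswap : ∑ x : Fin n × Fin n, √((R x.swap x.swap).re) * √((R x x).re)
      = swapOverlap fun j p => (R (j, p) (j, p)).re := by
    rw [swapOverlap, Fintype.sum_prod_type, sum_comm]
    simp
  have := (sum_le_sum fun x (_ : x ∈ univ) => hpsd.re_apply_le x.swap x).trans_eq hswap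
  rw [re_trace_CQ_mul, htr, Complex.one_re, Complex.re_sum]
  linarith

theorem exists_isCoupling_QOT_diagonal_eq (hs0 : ∀ j, 0 ≤ s j)
    (ht0 : ∀ j, 0 ≤ t j) (hs1 : ∑ j, s j = 1) (ht1 : ∑ j, t j = 1) :
    ∃ a, IsCoupling a s t ∧ (∀ b, IsCoupling b s t → swapOverlap b ≤ swapOverlap a) ∧
      QOT (CQ n) (diagonal fun i => (s i : ℂ)) (diagonal fun i => (t i : ℂ))
        = (1 - swapOverlap a) / 2 := by
  have hprod : IsCoupling (fun j p => s j * t p) s t :=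
    ⟨fun j p => mul_nonneg (hs0 j) (ht0 p), fun j => by rw [← mul_sum, ht1, mul_one],
      fun p => by rw [← sum_mul, hs1, one_mul]⟩
  obtain ⟨a, ha, hmax⟩ := (isCompact_setOf_isCoupling s t).exists_isMaxOn ⟨_, hprod⟩
    continuous_swapOverlap.continuousOn
  refine ⟨a, ha, fun b hb => hmax hb, IsLeast.csInf_eq ⟨⟨coherentLift a,
    coherentLift_mem_QCouplings ha hs1, re_trace_CQ_mul_coherentLift ha hs1⟩, ?_⟩⟩
  rintro _ ⟨R, hR, rfl⟩
  have : swapOverlap _ ≤ swapOverlap a := hmax (isCoupling_re_diag hR)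
  linarith [le_re_trace_CQ_mul hR.1.1 hR.1.2]

end Quantum

/-- lower bound for the transport cost between commuting (conjugated
diagonal) density matrices, with a characterization of the equality case. -/
theorem qot_diag_conj_lower_bound (n : ℕ) (s t : Fin n → ℝ)
    (hs : (∀ i, 0 ≤ s i) ∧ ∑ i, s i = 1)
    (ht : (∀ i, 0 ≤ t i) ∧ ∑ i, t i = 1)
    (U : Matrix (Fin n) (Fin n) ℂ) (hU : Uᴴ * U = 1) :
    ((1 / 2) * (⨆ i : Fin n, (Real.sqrt (s i) - Real.sqrt (t i)) ^ 2) ≤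
      QOT (CQ n) (Uᴴ * Matrix.diagonal (fun i => (s i : ℂ)) * U)
        (Uᴴ * Matrix.diagonal (fun i => (t i : ℂ)) * U)) ∧
    (QOT (CQ n) (Uᴴ * Matrix.diagonal (fun i => (s i : ℂ)) * U)
        (Uᴴ * Matrix.diagonal (fun i => (t i : ℂ)) * U) =
        (1 / 2) * (⨆ i : Fin n, (Real.sqrt (s i) - Real.sqrt (t i)) ^ 2) ↔
      ∃ i : Fin n,
        (∀ j, j ≠ i → t j ≤ s j ∧ s i * s j ≤ t i * t j) ∨
        (∀ j, j ≠ i → s j ≤ t j ∧ t i * t j ≤ s i * s j)) := by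
  obtain ⟨hs0, hs1⟩ := hs
  obtain ⟨ht0, ht1⟩ := ht
  have : Nonempty (Fin n) := univ_nonempty_iff.mp (nonempty_of_sum_ne_zero (hs1 ▸ one_ne_zero))
  obtain ⟨i₀, hi₀⟩ := exists_eq_ciSup_of_finite (f := fun i => (√(s i) - √(t i)) ^ 2)
  have hle_max : ∀ i, (√(s i) - √(t i)) ^ 2 ≤ (√(s i₀) - √(t i₀)) ^ 2 :=
    fun i => (le_ciSup (Finite.bddAbove_range _) i).trans_eq hi₀.symm
  obtain ⟨a, ha, hmax, hQOT⟩ := exists_isCoupling_QOT_diagonal_eq hs0 ht0 hs1 ht1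
  have hle : ∀ i, swapOverlap a ≤ 1 - (√(s i) - √(t i)) ^ 2 := ha.swapOverlap_le hs1
  rw [QOT_CQ_conj hU, hQOT, ← hi₀]
  refine ⟨by linarith [hle i₀], fun h => ⟨i₀, ha.pivotCondition_or_of_swapOverlap_eq hs1 ht1
    (by linarith)⟩, ?_⟩
  rintro ⟨i, hi⟩
  obtain ⟨b, hb, hbval⟩ := exists_isCoupling_swapOverlap_eq_of_or hs0 ht0 hs1 ht1 hi
  linarith [hmax b hb, hle i₀, hle i, hle_max i]
end
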